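/- Let 0 < a < b. For every ε > 0 and all real numbers a₁, a₂, there exists a constant C ≥ 0 (depending on ε, a₁, a₂, a, b) such that for every vector field v : ℝ² → ℝ² that is continuously differentiable on a neighborhood of the closed annulus {x : a ≤ |x| ≤ b}: |a₁ ∮_{∂B(0,b)} v_τ² ds + a₂ ∮_{∂B(0,a)} v_τ² ds| ≤ ε ∫_Ω ‖Dv(x)‖² dx + C ∫_Ω |v(x)|² dx, where ‖Dv(x)‖ denotes the Frobenius norm of the Jacobian matrix of v at x. -/

import Mathlib

open Real MeasureTheory

noncomputable section

/-- Partial derivative `∂₁ f` of a scalar function on `ℝ²`. -/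
def pd1 (f : ℝ × ℝ → ℝ) : ℝ × ℝ → ℝ := fun x => fderiv ℝ f x (1, 0)

/-- Partial derivative `∂₂ f` of a scalar function on `ℝ²`. -/
def pd2 (f : ℝ × ℝ → ℝ) : ℝ × ℝ → ℝ := fun x => fderiv ℝ f x (0, 1)

/-- First component of a vector field on `ℝ²`. -/
def cmp1 (v : ℝ × ℝ → ℝ × ℝ) : ℝ × ℝ → ℝ := fun x => (v x).1

/-- Second component of a vector field on `ℝ²`. -/
def cmp2 (v : ℝ × ℝ → ℝ × ℝ) : ℝ × ℝ → ℝ := fun x => (v x).2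

/-- The open annulus `Ω = {x ∈ ℝ² : a < |x| < b}`. -/
def ann (a b : ℝ) : Set (ℝ × ℝ) := {x | a ^ 2 < x.1 ^ 2 + x.2 ^ 2 ∧ x.1 ^ 2 + x.2 ^ 2 < b ^ 2}

/-- The closed annulus `{x ∈ ℝ² : a ≤ |x| ≤ b}`. -/
def cann (a b : ℝ) : Set (ℝ × ℝ) := {x | a ^ 2 ≤ x.1 ^ 2 + x.2 ^ 2 ∧ x.1 ^ 2 + x.2 ^ 2 ≤ b ^ 2}

/-- The circle `∂B(0, r) = {x ∈ ℝ² : |x| = r}`. -/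
def circ (r : ℝ) : Set (ℝ × ℝ) := {x | x.1 ^ 2 + x.2 ^ 2 = r ^ 2}

/-- Boundary integral `∮_{∂B(0,r)} f ds = ∫₀^{2π} f(r cos θ, r sin θ) r dθ`. -/
def bInt (r : ℝ) (f : ℝ × ℝ → ℝ) : ℝ :=
  ∫ θ in (0 : ℝ)..(2 * π), f (r * Real.cos θ, r * Real.sin θ) * r

/-- Tangential component `v_τ(x) = v(x)·(x₂, −x₁)/r` on the circle of radius `r`. -/
def tang (r : ℝ) (v : ℝ × ℝ → ℝ × ℝ) : ℝ × ℝ → ℝ :=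
  fun x => ((v x).1 * x.2 - (v x).2 * x.1) / r

/-- The Navier-slip condition on the inner circle `|x| = a`:
`μ Σ_{i,j} τ_i(x) n_j(x) (∂_i v_j(x) + ∂_j v_i(x)) = α v(x)·τ(x)` for all `|x| = a`,
where `n(x) = −x/a` and `τ(x) = (x₂, −x₁)/a`. -/
def navierSlip (μ α a : ℝ) (v : ℝ × ℝ → ℝ × ℝ) : Prop :=
  ∀ x : ℝ × ℝ, x.1 ^ 2 + x.2 ^ 2 = a ^ 2 →
    μ * ((x.2 / a) * (-(x.1 / a)) * (pd1 (cmp1 v) x + pd1 (cmp1 v) x)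
       + (x.2 / a) * (-(x.2 / a)) * (pd1 (cmp2 v) x + pd2 (cmp1 v) x)
       + (-(x.1 / a)) * (-(x.1 / a)) * (pd2 (cmp1 v) x + pd1 (cmp2 v) x)
       + (-(x.1 / a)) * (-(x.2 / a)) * (pd2 (cmp2 v) x + pd2 (cmp2 v) x))
    = α * ((v x).1 * (x.2 / a) + (v x).2 * (-(x.1 / a)))


/-!
Along the ray of angle `θ`, the tangential component `T(r) = v₁ sin θ - v₂ cos θ` at the point
`(r cos θ, r sin θ)` satisfies `T² ≤ |v|²` and `T'² ≤ |Dv|²`. The one-dimensional trace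
inequality `T(R)² ≤ ∫ₐᵇ (T²/(b - a) + 2|T||T'|) dr`, with Young's inequality
`2|T||T'| ≤ T²/η + ηT'²`, bounds `T(R)²` by a ray integral of `(1/(b - a) + 1/η)|v|² + η|Dv|²`.
Since `r/a ≥ 1` on `[a, b]`, integrating in `θ` turns this into the area integral over `Ω` in
polar coordinates, at the cost of a factor `R/a`. Choosing `η` small against `|a₁| b/a + |a₂|`
gives the estimate.
-/

open Set

lemma continuous_intervalIntegral_of_continuousOn {F : ℝ → ℝ → ℝ} {a b : ℝ} (hab : a ≤ b)
    (hF : ContinuousOn (Function.uncurry F) (univ ×ˢ Icc a b)) :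
    Continuous fun x => ∫ t in a..b, F x t := by
  -- Precomposing with the projection onto `[a, b]` makes `F` continuous without changing the
  -- integral.
  have hproj : Continuous fun t : ℝ => (projIcc a b hab t : ℝ) :=
    continuous_subtype_val.comp continuous_projIcc
  have hext : Continuous fun p : ℝ × ℝ => F p.1 (projIcc a b hab p.2) :=
    hF.comp_continuous (continuous_fst.prodMk (hproj.comp continuous_snd))
      fun p => ⟨trivial, Subtype.mem _⟩
  refine (intervalIntegral.continuous_parametric_intervalIntegral_of_continuous'
    (μ := volume) (f := fun x t => F x (projIcc a b hab t)) hext a b).congr fun x => ?_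
  refine intervalIntegral.integral_congr fun t ht => ?_
  rw [uIcc_of_le hab] at ht
  simp [projIcc_of_mem hab ht]

lemma polarCoord_symm_fst_sq_add_snd_sq (p : ℝ × ℝ) :
    (polarCoord.symm p).1 ^ 2 + (polarCoord.symm p).2 ^ 2 = p.1 ^ 2 := by
  simp only [polarCoord_symm_apply]
  linear_combination p.1 ^ 2 * cos_sq_add_sin_sq p.2

lemma polarCoord_symm_mem_cann {a b r : ℝ} (θ : ℝ) (ha : 0 ≤ a) (hr : r ∈ Icc a b) :
    polarCoord.symm (r, θ) ∈ cann a b := by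
  rw [cann, mem_ofPred_eq, polarCoord_symm_fst_sq_add_snd_sq]
  exact ⟨pow_le_pow_left₀ ha hr.1 2, pow_le_pow_left₀ (ha.trans hr.1) hr.2 2⟩

lemma polarCoord_symm_mem_ann_iff {a b r : ℝ} (θ : ℝ) (ha : 0 ≤ a) (hab : a ≤ b)
    (hr : 0 ≤ r) :
    polarCoord.symm (r, θ) ∈ ann a b ↔ r ∈ Ioo a b := by
  rw [ann, mem_ofPred_eq, polarCoord_symm_fst_sq_add_snd_sq]
  constructor
  · rintro ⟨h₁, h₂⟩
    exact ⟨lt_of_pow_lt_pow_left₀ 2 hr h₁, lt_of_pow_lt_pow_left₀ 2 (ha.trans hab) h₂⟩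
  · rintro ⟨h₁, h₂⟩
    exact ⟨pow_lt_pow_left₀ h₁ ha two_ne_zero, pow_lt_pow_left₀ h₂ hr two_ne_zero⟩

lemma ann_subset_cann (a b : ℝ) : ann a b ⊆ cann a b := fun _ hx => ⟨hx.1.le, hx.2.le⟩

lemma isCompact_cann (a b : ℝ) : IsCompact (cann a b) := by
  have hf : Continuous fun x : ℝ × ℝ => x.1 ^ 2 + x.2 ^ 2 := by fun_prop
  refine Metric.isCompact_of_isClosed_isBounded
    ((isClosed_le continuous_const hf).inter (isClosed_le hf continuous_const))
    ((Metric.isBounded_closedBall (x := 0) (r := |b|)).subset fun x hx => ?_)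
  have h₁ : x.1 ^ 2 ≤ b ^ 2 := by nlinarith [hx.2, sq_nonneg x.2]
  have h₂ : x.2 ^ 2 ≤ b ^ 2 := by nlinarith [hx.2, sq_nonneg x.1]
  simpa [Prod.norm_def] using ⟨sq_le_sq.mp h₁, sq_le_sq.mp h₂⟩

lemma measurableSet_ann (a b : ℝ) : MeasurableSet (ann a b) := by
  have hf : Continuous fun x : ℝ × ℝ => x.1 ^ 2 + x.2 ^ 2 := by fun_prop
  exact ((isOpen_lt continuous_const hf).inter (isOpen_lt hf continuous_const)).measurableSet

lemma integrableOn_ann_of_continuousOn {a b : ℝ} {f : ℝ × ℝ → ℝ}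
    (hf : ContinuousOn f (cann a b)) : IntegrableOn f (ann a b) :=
  (hf.integrableOn_compact (isCompact_cann a b)).mono_set (ann_subset_cann a b)

lemma integral_ann_eq_polar {a b : ℝ} (ha : 0 ≤ a) (hab : a ≤ b) {P : ℝ × ℝ → ℝ}
    (hP : ContinuousOn P (cann a b)) :
    ∫ x in ann a b, P x = ∫ θ in (0)..(2 * π), ∫ r in a..b, r * P (polarCoord.symm (r, θ)) := by
  set F : ℝ × ℝ → ℝ := fun p => p.1 * P (polarCoord.symm p)
  set S : Set (ℝ × ℝ) := Ioo a b ×ˢ Ioo (-π) π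
  have hSm : MeasurableSet S := measurableSet_Ioo.prod measurableSet_Ioo
  have hS : S ⊆ polarCoord.target := prod_mono (fun r hr => ha.trans_lt hr.1) subset_rfl
  have hF : IntegrableOn F S := by
    refine (ContinuousOn.integrableOn_compact (isCompact_Icc.prod isCompact_Icc) ?_).mono_set
      (prod_mono Ioo_subset_Icc_self Ioo_subset_Icc_self)
    refine continuousOn_fst.mul (hP.comp continuous_polarCoord_symm.continuousOn ?_)
    rintro ⟨r, θ⟩ ⟨hr, -⟩
    exact polarCoord_symm_mem_cann θ ha hr
  have hpolar : ∫ x in ann a b, P x = ∫ p in S, F p := by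
    rw [← integral_indicator (measurableSet_ann a b), ← integral_comp_polarCoord_symm,
      ← inter_eq_self_of_subset_right hS, ← setIntegral_indicator hSm]
    refine setIntegral_congr_fun polarCoord.open_target.measurableSet fun p hp => ?_
    obtain ⟨r, θ⟩ := p
    by_cases hr : r ∈ Ioo a b
    · have hx := (polarCoord_symm_mem_ann_iff θ ha hab hp.1.le).mpr hr
      rw [indicator_of_mem hx, indicator_of_mem (show (r, θ) ∈ S from ⟨hr, hp.2⟩), smul_eq_mul]
    · have hx := mt (polarCoord_symm_mem_ann_iff θ ha hab hp.1.le).mp hr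
      rw [indicator_of_notMem hx, indicator_of_notMem (show (r, θ) ∉ S from fun h => hr h.1),
        smul_zero]
  -- `polarCoord` takes angles in `(-π, π)`, `bInt` in `[0, 2π]`.
  have hperiodic : Function.Periodic
      (fun θ => ∫ r in a..b, r * P (polarCoord.symm (r, θ))) (2 * π) := by
    intro θ
    simp [polarCoord_symm_apply]
  have hshift := hperiodic.intervalIntegral_add_eq 0 (-π)
  rw [zero_add, show -π + 2 * π = π by ring] at hshift
  rw [hpolar, Measure.volume_eq_prod, setIntegral_prod _ hF, integral_integral_swap, hshift,
    intervalIntegral.integral_of_le (by linarith [pi_pos]), integral_Ioc_eq_integral_Ioo]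
  · refine setIntegral_congr_fun measurableSet_Ioo fun θ _ => ?_
    rw [intervalIntegral.integral_of_le hab, integral_Ioc_eq_integral_Ioo]
  · rwa [Measure.prod_restrict]

lemma integral_ann_add_const_mul {a b : ℝ} {f g : ℝ × ℝ → ℝ} (hf : ContinuousOn f (cann a b))
    (hg : ContinuousOn g (cann a b)) (c d : ℝ) :
    ∫ x in ann a b, (c * f x + d * g x) = c * (∫ x in ann a b, f x) + d * ∫ x in ann a b, g x := by
  rw [integral_add ((integrableOn_ann_of_continuousOn hf).const_mul c)
    ((integrableOn_ann_of_continuousOn hg).const_mul d), integral_const_mul, integral_const_mul]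

lemma integral_sq_mul_le_of_forall_ray {a b R : ℝ} (ha : 0 < a) (hab : a ≤ b) (hR : 0 ≤ R)
    {T : ℝ → ℝ} {P : ℝ × ℝ → ℝ} (hT : Continuous T) (hP : ContinuousOn P (cann a b))
    (hP₀ : ∀ x ∈ cann a b, 0 ≤ P x)
    (hray : ∀ θ, T θ ^ 2 ≤ ∫ r in a..b, P (polarCoord.symm (r, θ))) :
    ∫ θ in (0)..(2 * π), T θ ^ 2 * R ≤ R / a * ∫ x in ann a b, P x := by
  have hPray : ContinuousOn (Function.uncurry fun θ r => r * P (polarCoord.symm (r, θ)))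
      (univ ×ˢ Icc a b) :=
    continuousOn_snd.mul (hP.comp (by fun_prop) fun p hp => polarCoord_symm_mem_cann p.1 ha.le hp.2)
  rw [integral_ann_eq_polar ha.le hab hP, ← intervalIntegral.integral_const_mul]
  refine intervalIntegral.integral_mono_on two_pi_pos.le
    (((hT.pow 2).mul continuous_const).intervalIntegrable _ _)
    (((continuous_intervalIntegral_of_continuousOn hab hPray).intervalIntegrable _ _).const_mul _)
    fun θ _ => ?_
  have hPr : ContinuousOn (fun r => P (polarCoord.symm (r, θ))) (uIcc a b) := by
    rw [uIcc_of_le hab]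
    exact hP.comp (by fun_prop) fun r hr => polarCoord_symm_mem_cann θ ha.le hr
  -- `r / a ≥ 1` on `[a, b]` inserts the polar Jacobian `r`.
  have hweight : ∫ r in a..b, P (polarCoord.symm (r, θ))
      ≤ (∫ r in a..b, r * P (polarCoord.symm (r, θ))) / a := by
    rw [← intervalIntegral.integral_div]
    refine intervalIntegral.integral_mono_on hab hPr.intervalIntegrable
      ((continuousOn_id.mul hPr).div_const a).intervalIntegrable fun r hr => ?_
    rw [le_div_iff₀ ha, mul_comm]
    exact mul_le_mul_of_nonneg_right hr.1 (hP₀ _ (polarCoord_symm_mem_cann θ ha.le hr))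
  calc T θ ^ 2 * R ≤ (∫ r in a..b, r * P (polarCoord.symm (r, θ))) / a * R :=
        mul_le_mul_of_nonneg_right ((hray θ).trans hweight) hR
    _ = _ := by ring

lemma sub_div_mul_sq_sub_le_integral {G G' : ℝ → ℝ} {c d s L : ℝ} (hcd : c ≤ d) (hL : 0 < L)
    (hs : ∀ r ∈ Icc c d, |r - s| ≤ L) (hG : ∀ r ∈ Icc c d, HasDerivAt G (G' r) r)
    (hG' : ContinuousOn G' (Icc c d)) :
    (d - s) / L * G d ^ 2 - (c - s) / L * G c ^ 2
      ≤ ∫ r in c..d, (G r ^ 2 / L + 2 * |G r| * |G' r|) := by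
  have hGc : ContinuousOn G (Icc c d) := fun r hr => (hG r hr).continuousAt.continuousWithinAt
  have hderiv : ∀ r ∈ uIcc c d, HasDerivAt (fun r => (r - s) / L * G r ^ 2)
      (G r ^ 2 / L + (r - s) / L * (2 * G r * G' r)) r := by
    intro r hr
    rw [uIcc_of_le hcd] at hr
    refine ((((hasDerivAt_id' r).sub_const s).div_const L).mul ((hG r hr).pow 2)).congr_deriv ?_
    rw [Pi.pow_apply]
    ring
  have hint : ∀ f : ℝ → ℝ, ContinuousOn f (Icc c d) → IntervalIntegrable f volume c d :=
    fun f hf => (hf.mono (uIcc_of_le hcd).subset).intervalIntegrable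
  rw [← intervalIntegral.integral_eq_sub_of_hasDerivAt hderiv (hint _ (by fun_prop))]
  refine intervalIntegral.integral_mono_on hcd (hint _ (by fun_prop)) (hint _ (by fun_prop))
    fun r hr => add_le_add_right ?_ _
  have hw : |(r - s) / L| ≤ 1 := by rw [abs_div, abs_of_pos hL, div_le_one hL]; exact hs r hr
  calc (r - s) / L * (2 * G r * G' r) ≤ |(r - s) / L| * (2 * |G r| * |G' r|) := by
        rw [← abs_two, ← abs_mul, ← abs_mul, ← abs_mul, abs_two]; exact le_abs_self _
    _ ≤ 2 * |G r| * |G' r| := mul_le_of_le_one_left (by positivity) hw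

lemma sq_le_integral_of_hasDerivAt {G G' : ℝ → ℝ} {a b t : ℝ} (hab : a < b) (ht : t ∈ Icc a b)
    (hG : ∀ r ∈ Icc a b, HasDerivAt G (G' r) r) (hG' : ContinuousOn G' (Icc a b)) :
    G t ^ 2 ≤ ∫ r in a..b, (G r ^ 2 / (b - a) + 2 * |G r| * |G' r|) := by
  have hL : 0 < b - a := sub_pos.mpr hab
  have hsub₁ : Icc a t ⊆ Icc a b := Icc_subset_Icc_right ht.2
  have hsub₂ : Icc t b ⊆ Icc a b := Icc_subset_Icc_left ht.1
  have hleft := sub_div_mul_sq_sub_le_integral (s := a) ht.1 hL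
    (fun r hr => by rw [abs_of_nonneg (by linarith [hr.1])]; linarith [hr.2, ht.2])
    (fun r hr => hG r (hsub₁ hr)) (hG'.mono hsub₁)
  have hright := sub_div_mul_sq_sub_le_integral (s := b) ht.2 hL
    (fun r hr => by rw [abs_of_nonpos (by linarith [hr.2])]; linarith [hr.1, ht.1])
    (fun r hr => hG r (hsub₂ hr)) (hG'.mono hsub₂)
  have hGc : ContinuousOn G (Icc a b) := fun r hr => (hG r hr).continuousAt.continuousWithinAt
  have hint : IntervalIntegrable (fun r => G r ^ 2 / (b - a) + 2 * |G r| * |G' r|) volume a b :=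
    ((by fun_prop : ContinuousOn _ (Icc a b)).mono (uIcc_of_le hab.le).subset).intervalIntegrable
  rw [← intervalIntegral.integral_add_adjacent_intervals
    (hint.mono_set (by rw [uIcc_of_le ht.1, uIcc_of_le hab.le]; exact hsub₁))
    (hint.mono_set (by rw [uIcc_of_le ht.2, uIcc_of_le hab.le]; exact hsub₂))]
  -- The boundary terms at `a` and `b` vanish and those at `t` add up to `G t ^ 2`.
  have hsplit : G t ^ 2 = ((t - a) / (b - a) * G t ^ 2 - (a - a) / (b - a) * G a ^ 2)
      + ((b - b) / (b - a) * G b ^ 2 - (t - b) / (b - a) * G t ^ 2) := by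
    field_simp
    ring
  linarith

def jacobianNormSq (v : ℝ × ℝ → ℝ × ℝ) (x : ℝ × ℝ) : ℝ :=
  pd1 (cmp1 v) x ^ 2 + pd1 (cmp2 v) x ^ 2 + pd2 (cmp1 v) x ^ 2 + pd2 (cmp2 v) x ^ 2

lemma continuousOn_jacobianNormSq {v : ℝ × ℝ → ℝ × ℝ} {U : Set (ℝ × ℝ)} (hU : IsOpen U)
    (hv : ContDiffOn ℝ 1 v U) : ContinuousOn (jacobianNormSq v) U := by
  have h₁ := hv.fst.continuousOn_fderiv_of_isOpen hU le_rfl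
  have h₂ := hv.snd.continuousOn_fderiv_of_isOpen hU le_rfl
  unfold jacobianNormSq pd1 pd2 cmp1 cmp2
  fun_prop

lemma fderiv_apply_eq_pd (f : ℝ × ℝ → ℝ) (x : ℝ × ℝ) (c s : ℝ) :
    fderiv ℝ f x (c, s) = c * pd1 f x + s * pd2 f x := by
  rw [pd1, pd2, ← smul_eq_mul, ← smul_eq_mul, ← map_smul, ← map_smul, ← map_add]
  simp

lemma sq_mul_sin_sub_mul_cos_le (x y θ : ℝ) : (x * sin θ - y * cos θ) ^ 2 ≤ x ^ 2 + y ^ 2 := by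
  nlinarith [sin_sq_add_cos_sq θ, sq_nonneg (x * cos θ + y * sin θ)]

lemma sq_cos_mul_add_sin_mul_le (x y θ : ℝ) : (cos θ * x + sin θ * y) ^ 2 ≤ x ^ 2 + y ^ 2 := by
  nlinarith [sin_sq_add_cos_sq θ, sq_nonneg (x * sin θ - y * cos θ)]

lemma sq_fderiv_tangential_le (v : ℝ × ℝ → ℝ × ℝ) (x : ℝ × ℝ) (θ : ℝ) :
    (fderiv ℝ (cmp1 v) x (cos θ, sin θ) * sin θ - fderiv ℝ (cmp2 v) x (cos θ, sin θ) * cos θ) ^ 2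
      ≤ jacobianNormSq v x := by
  refine (sq_mul_sin_sub_mul_cos_le _ _ θ).trans ?_
  rw [fderiv_apply_eq_pd, fderiv_apply_eq_pd, jacobianNormSq]
  linarith [sq_cos_mul_add_sin_mul_le (pd1 (cmp1 v) x) (pd2 (cmp1 v) x) θ,
    sq_cos_mul_add_sin_mul_le (pd1 (cmp2 v) x) (pd2 (cmp2 v) x) θ]

lemma hasDerivAt_tangential_along_ray {v : ℝ × ℝ → ℝ × ℝ} {r θ : ℝ}
    (hv : DifferentiableAt ℝ v (polarCoord.symm (r, θ))) :
    HasDerivAt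
      (fun s => (v (polarCoord.symm (s, θ))).1 * sin θ - (v (polarCoord.symm (s, θ))).2 * cos θ)
      (fderiv ℝ (cmp1 v) (polarCoord.symm (r, θ)) (cos θ, sin θ) * sin θ
        - fderiv ℝ (cmp2 v) (polarCoord.symm (r, θ)) (cos θ, sin θ) * cos θ) r := by
  have hray : HasDerivAt (fun s => polarCoord.symm (s, θ)) (cos θ, sin θ) r := by
    simp only [polarCoord_symm_apply]
    exact (hasDerivAt_mul_const _).prodMk (hasDerivAt_mul_const _)
  have h₁ := hv.fst.hasFDerivAt.comp_hasDerivAt r hray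
  have h₂ := hv.snd.hasFDerivAt.comp_hasDerivAt r hray
  exact (h₁.mul_const _).sub (h₂.mul_const _)

lemma tang_polarCoord_symm (v : ℝ × ℝ → ℝ × ℝ) {R : ℝ} (hR : R ≠ 0) (θ : ℝ) :
    tang R v (polarCoord.symm (R, θ))
      = (v (polarCoord.symm (R, θ))).1 * sin θ - (v (polarCoord.symm (R, θ))).2 * cos θ := by
  rw [tang, polarCoord_symm_apply]
  field_simp

lemma sq_div_add_two_mul_abs_mul_abs_le {T T' N Q L η : ℝ} (hL : 0 < L) (hη : 0 < η)
    (hT : T ^ 2 ≤ N) (hT' : T' ^ 2 ≤ Q) :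
    T ^ 2 / L + 2 * |T| * |T'| ≤ (1 / L + 1 / η) * N + η * Q := by
  have hyoung : 2 * |T| * |T'| ≤ T ^ 2 / η + η * T' ^ 2 := by
    rw [div_add' _ _ _ hη.ne', le_div_iff₀ hη]
    have hsq : (|T| - η * |T'|) ^ 2 = T ^ 2 + η * T' ^ 2 * η - 2 * |T| * |T'| * η := by
      rw [sub_sq, mul_pow, sq_abs, sq_abs]
      ring
    linarith [sq_nonneg (|T| - η * |T'|)]
  have := div_le_div_of_nonneg_right hT hL.le
  have := div_le_div_of_nonneg_right hT hη.le
  have := mul_le_mul_of_nonneg_left hT' hη.le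
  rw [add_mul, one_div_mul_eq_div, one_div_mul_eq_div]
  linarith

section Trace

variable {a b η : ℝ} {v : ℝ × ℝ → ℝ × ℝ} {U : Set (ℝ × ℝ)}

lemma sq_tangential_le_integral_along_ray (ha : 0 ≤ a) (hab : a < b) (hη : 0 < η)
    (hU : IsOpen U) (hsub : cann a b ⊆ U) (hv : ContDiffOn ℝ 1 v U) {R : ℝ} (hR : R ∈ Icc a b)
    (θ : ℝ) :
    ((v (polarCoord.symm (R, θ))).1 * sin θ - (v (polarCoord.symm (R, θ))).2 * cos θ) ^ 2
      ≤ ∫ r in a..b, ((1 / (b - a) + 1 / η)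
          * ((v (polarCoord.symm (r, θ))).1 ^ 2 + (v (polarCoord.symm (r, θ))).2 ^ 2)
          + η * jacobianNormSq v (polarCoord.symm (r, θ))) := by
  have hmaps : MapsTo (fun r => polarCoord.symm (r, θ)) (Icc a b) U :=
    fun r hr => hsub (polarCoord_symm_mem_cann θ ha hr)
  have hray : ContinuousOn (fun r => polarCoord.symm (r, θ)) (Icc a b) := by fun_prop
  have hD₁ := (hv.fst.continuousOn_fderiv_of_isOpen hU le_rfl).comp hray hmaps
  have hD₂ := (hv.snd.continuousOn_fderiv_of_isOpen hU le_rfl).comp hray hmaps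
  have hv₁ := (hv.continuousOn.comp hray hmaps).fst
  have hv₂ := (hv.continuousOn.comp hray hmaps).snd
  have hQ := (continuousOn_jacobianNormSq hU hv).comp hray hmaps
  have htrace := sq_le_integral_of_hasDerivAt hab hR
    (fun r hr => hasDerivAt_tangential_along_ray
      ((hv.differentiableOn one_ne_zero).differentiableAt (hU.mem_nhds (hmaps hr))))
    (by simp only [Function.comp_def] at hD₁ hD₂; fun_prop)
  refine htrace.trans (intervalIntegral.integral_mono_on hab.le ?_ ?_ fun r _ =>
    sq_div_add_two_mul_abs_mul_abs_le (sub_pos.mpr hab) hη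
      (sq_mul_sin_sub_mul_cos_le _ _ θ) (sq_fderiv_tangential_le v _ θ))
  all_goals
    refine ContinuousOn.intervalIntegrable ?_
    rw [uIcc_of_le hab.le]
    simp only [Function.comp_def] at hD₁ hD₂ hv₁ hv₂ hQ
    fun_prop

lemma bInt_tang_sq_le (ha : 0 < a) (hab : a < b) (hη : 0 < η) (hU : IsOpen U)
    (hsub : cann a b ⊆ U) (hv : ContDiffOn ℝ 1 v U) {R : ℝ} (hR : R ∈ Icc a b) :
    bInt R (fun x => tang R v x ^ 2)
      ≤ R / a * ((1 / (b - a) + 1 / η) * (∫ x in ann a b, ((v x).1 ^ 2 + (v x).2 ^ 2))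
          + η * ∫ x in ann a b, jacobianNormSq v x) := by
  have hR₀ : 0 < R := ha.trans_le hR.1
  have hN : ContinuousOn (fun x => (v x).1 ^ 2 + (v x).2 ^ 2) (cann a b) :=
    ((hv.continuousOn.mono hsub).fst.pow 2).add ((hv.continuousOn.mono hsub).snd.pow 2)
  have hQ := (continuousOn_jacobianNormSq hU hv).mono hsub
  have hT : Continuous fun θ =>
      (v (polarCoord.symm (R, θ))).1 * sin θ - (v (polarCoord.symm (R, θ))).2 * cos θ := by
    have hcircle : Continuous fun θ => v (polarCoord.symm (R, θ)) :=
      hv.continuousOn.comp_continuous (by fun_prop)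
        fun θ => hsub (polarCoord_symm_mem_cann θ ha.le hR)
    have := hcircle.fst
    have := hcircle.snd
    fun_prop
  rw [← integral_ann_add_const_mul hN hQ, bInt]
  refine le_of_eq_of_le (intervalIntegral.integral_congr fun θ _ => ?_)
    (integral_sq_mul_le_of_forall_ray ha hab.le hR₀.le hT (by fun_prop)
      (fun x _ => by unfold jacobianNormSq; have := hη.le; positivity)
      (sq_tangential_le_integral_along_ray ha.le hab hη hU hsub hv hR))
  exact congrArg (· ^ 2 * R) (tang_polarCoord_symm v hR₀.ne' θ)

end Trace

lemma bInt_nonneg {r : ℝ} (hr : 0 ≤ r) {f : ℝ × ℝ → ℝ} (hf : ∀ x, 0 ≤ f x) : 0 ≤ bInt r f :=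
  intervalIntegral.integral_nonneg two_pi_pos.le fun _ _ => mul_nonneg (hf _) hr

/-- the ε-trace estimate on the annulus: boundary integrals of squared
tangential components are controlled by `ε` times the Dirichlet energy plus a constant
times the `L²` norm. -/
theorem epsilon_trace_estimate (a b : ℝ) (ha : 0 < a) (hab : a < b) :
    ∀ ε : ℝ, 0 < ε → ∀ a₁ a₂ : ℝ, ∃ C : ℝ, 0 ≤ C ∧
      ∀ (v : ℝ × ℝ → ℝ × ℝ) (U : Set (ℝ × ℝ)),
        IsOpen U → cann a b ⊆ U → ContDiffOn ℝ 1 v U →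
        |a₁ * bInt b (fun x => (tang b v x) ^ 2)
          + a₂ * bInt a (fun x => (tang a v x) ^ 2)|
        ≤ ε * (∫ x in ann a b,
              ((pd1 (cmp1 v) x) ^ 2 + (pd1 (cmp2 v) x) ^ 2
                + (pd2 (cmp1 v) x) ^ 2 + (pd2 (cmp2 v) x) ^ 2))
          + C * ∫ x in ann a b, ((v x).1 ^ 2 + (v x).2 ^ 2) := by
  intro ε hε a₁ a₂
  set M := |a₁| * (b / a) + |a₂|
  have hM : 0 ≤ M := by have := div_pos (ha.trans hab) ha; positivity
  set η := ε / (M + 1)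
  have hη : 0 < η := by positivity
  have hMη : M * η ≤ ε := by
    rw [mul_div_assoc', div_le_iff₀ (by positivity)]
    nlinarith
  set c := 1 / (b - a) + 1 / η
  have hc : 0 < c := by have := sub_pos.mpr hab; positivity
  refine ⟨M * c, mul_nonneg hM hc.le, fun v U hU hsub hv => ?_⟩
  have hX := bInt_tang_sq_le ha hab hη hU hsub hv (R := b) ⟨hab.le, le_rfl⟩
  have hY := bInt_tang_sq_le ha hab hη hU hsub hv (R := a) ⟨le_rfl, hab.le⟩
  rw [div_self ha.ne', one_mul] at hY
  have hX₀ := bInt_nonneg (ha.trans hab).le fun x => sq_nonneg (tang b v x)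
  have hY₀ := bInt_nonneg ha.le fun x => sq_nonneg (tang a v x)
  have hQ₀ : 0 ≤ ∫ x in ann a b, jacobianNormSq v x :=
    setIntegral_nonneg (measurableSet_ann a b) fun x _ => by unfold jacobianNormSq; positivity
  set N := ∫ x in ann a b, ((v x).1 ^ 2 + (v x).2 ^ 2)
  set Q := ∫ x in ann a b, jacobianNormSq v x
  change _ ≤ ε * Q + M * c * N
  calc _ ≤ |a₁| * bInt b (fun x => tang b v x ^ 2) + |a₂| * bInt a (fun x => tang a v x ^ 2) := by
        refine (abs_add_le _ _).trans_eq ?_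
        rw [abs_mul, abs_mul, abs_of_nonneg hX₀, abs_of_nonneg hY₀]
    _ ≤ |a₁| * (b / a * (c * N + η * Q)) + |a₂| * (c * N + η * Q) := by gcongr
    _ = M * η * Q + M * c * N := by ring
    _ ≤ ε * Q + M * c * N := by gcongr
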